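/- Let r > 0. For every continuous g : [0,r] → ℝ there exists a unique h ∈ C²₀([0,r]) such that h''(x) + h'(x)/x = g(x) for all x ∈ (0,r]. Moreover the solution satisfies ‖h''‖_{C⁰([0,r])} ≤ (3/2) ‖g‖_{C⁰([0,r])}, and it is given explicitly by h(x) = ∫₀ˣ (log x - log t) t g(t) dt. -/

import Mathlib

/-!
Since `h'' + h'/x = x⁻¹ (x h')'`, the equation says `(x h')' = x g`. With `F x = ∫₀ˣ t g t`
the solution has `h' = F / x` and `h'' = g - F / x²`; as `|F x| ≤ ‖g‖ x² / 2`, this gives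
`|h''| ≤ 3/2 ‖g‖` on `(0, r]`, while at `0` l'Hôpital gives `h''(0) = g(0) / 2`. Integrating
`F / x` by parts gives `h = log x · F - ∫₀ˣ t log t g t`. For uniqueness, the derivative `u` of
the difference of two solutions has `(x u)' = 0` and `u 0 = 0`, hence `u = 0`.
-/

open Set

/-- `h` belongs to `C²₀([0,r])` (i.e. `h ∈ C²([0,r])` with `h(0) = h'(0) = 0`)
and satisfies `h''(x) + h'(x)/x = g(x)` for all `x ∈ (0, r]`. -/
def LinSol (r : ℝ) (g h : ℝ → ℝ) : Prop :=
  ContDiffOn ℝ 2 h (Icc 0 r) ∧ h 0 = 0 ∧ derivWithin h (Icc 0 r) 0 = 0 ∧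
  ∀ x ∈ Ioc (0:ℝ) r,
    derivWithin (derivWithin h (Icc 0 r)) (Icc 0 r) x + derivWithin h (Icc 0 r) x / x = g x

open Filter Topology

lemma hasDerivWithinAt_Ici_of_hasDerivAt_of_tendsto {f f' : ℝ → ℝ} {a e : ℝ}
    (hf : ∀ x > a, HasDerivAt f (f' x) x) (hcont : Tendsto f (𝓝[>] a) (𝓝 (f a)))
    (hlim : Tendsto f' (𝓝[>] a) (𝓝 e)) : HasDerivWithinAt f e (Ici a) a :=
  hasDerivWithinAt_Ici_of_tendsto_deriv
    (fun x hx => (hf x hx).differentiableAt.differentiableWithinAt) hcont self_mem_nhdsWithin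
    (hlim.congr' (eventually_nhdsWithin_of_forall fun x hx => (hf x hx).deriv.symm))

section Derivatives

variable {𝕜 F : Type*} [NontriviallyNormedField 𝕜] [NormedAddCommGroup F] [NormedSpace 𝕜 F]
  {s : Set 𝕜} {f f' f'' : 𝕜 → F}

lemma derivWithin_derivWithin_eqOn (hs : UniqueDiffOn 𝕜 s)
    (hf : ∀ x ∈ s, HasDerivWithinAt f (f' x) s x)
    (hf' : ∀ x ∈ s, HasDerivWithinAt f' (f'' x) s x) :
    EqOn (derivWithin (derivWithin f s) s) f'' s := fun x hx => by
  have hd : EqOn (derivWithin f s) f' s := fun y hy => (hf y hy).derivWithin (hs y hy)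
  rw [derivWithin_congr hd (hd hx)]
  exact (hf' x hx).derivWithin (hs x hx)

lemma contDiffOn_two_of_hasDerivWithinAt (hs : UniqueDiffOn 𝕜 s)
    (hf : ∀ x ∈ s, HasDerivWithinAt f (f' x) s x)
    (hf' : ∀ x ∈ s, HasDerivWithinAt f' (f'' x) s x) (hf'' : ContinuousOn f'' s) :
    ContDiffOn 𝕜 2 f s := by
  have hd : EqOn (derivWithin f s) f' s := fun y hy => (hf y hy).derivWithin (hs y hy)
  have hd' : EqOn (derivWithin f' s) f'' s := fun y hy => (hf' y hy).derivWithin (hs y hy)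
  rw [show (2 : WithTop ℕ∞) = 1 + 1 from rfl, contDiffOn_succ_iff_derivWithin hs]
  refine ⟨fun x hx => (hf x hx).differentiableWithinAt, by simp, ContDiffOn.congr ?_ hd⟩
  rw [show (1 : WithTop ℕ∞) = 0 + 1 from rfl, contDiffOn_succ_iff_derivWithin hs]
  exact ⟨fun x hx => (hf' x hx).differentiableWithinAt, by simp,
    contDiffOn_zero.2 (hf''.congr hd')⟩

end Derivatives

section Uniqueness

variable {r : ℝ}

lemma eqOn_zero_of_derivWithin_add_div_eq_zero (hr : 0 < r) {u : ℝ → ℝ}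
    (hu : DifferentiableOn ℝ u (Icc 0 r)) (hu₀ : u 0 = 0)
    (hode : ∀ x ∈ Ioc 0 r, derivWithin u (Icc 0 r) x + u x / x = 0) :
    EqOn u 0 (Icc 0 r) := by
  have hxu : ∀ x ∈ Icc 0 r, HasDerivWithinAt (fun y => y * u y) 0 (Icc 0 r) x := by
    intro x hx
    refine ((hasDerivWithinAt_id x _).fun_mul (hu x hx).hasDerivWithinAt).congr_deriv ?_
    rcases hx.1.eq_or_lt with rfl | hx₀
    · simp [hu₀]
    · calc 1 * u x + id x * derivWithin u (Icc 0 r) x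
          = x * (derivWithin u (Icc 0 r) x + u x / x) := by simp only [id]; field_simp; ring
        _ = 0 := by rw [hode x ⟨hx₀, hx.2⟩, mul_zero]
  have hconst := constant_of_derivWithin_zero
    (fun x hx => (hxu x hx).differentiableWithinAt)
    (fun x hx => (hxu x (Ico_subset_Icc_self hx)).derivWithin
      (uniqueDiffOn_Icc hr x (Ico_subset_Icc_self hx)))
  intro x hx
  rcases hx.1.eq_or_lt with rfl | hx₀
  · exact hu₀
  · simpa [hx₀.ne'] using hconst x hx

variable {g g' g₁ g₂ h h₁ h₂ : ℝ → ℝ}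

lemma LinSol.congr (H : LinSol r g h) (hg : EqOn g g' (Ioc 0 r)) : LinSol r g' h :=
  ⟨H.1, H.2.1, H.2.2.1, fun x hx => (H.2.2.2 x hx).trans (hg hx)⟩

lemma LinSol.sub (hr : 0 < r) (H₁ : LinSol r g₁ h₁) (H₂ : LinSol r g₂ h₂) :
    LinSol r (g₁ - g₂) (h₁ - h₂) := by
  obtain ⟨S₁, h₁₀, d₁₀, ode₁⟩ := H₁
  obtain ⟨S₂, h₂₀, d₂₀, ode₂⟩ := H₂
  have hs := uniqueDiffOn_Icc hr
  have D₁ := S₁.differentiableOn two_ne_zero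
  have D₂ := S₂.differentiableOn two_ne_zero
  have D₁' := (S₁.derivWithin hs (m := 1) le_rfl).differentiableOn one_ne_zero
  have D₂' := (S₂.derivWithin hs (m := 1) le_rfl).differentiableOn one_ne_zero
  have hd : EqOn (derivWithin (h₁ - h₂) (Icc 0 r))
      (derivWithin h₁ (Icc 0 r) - derivWithin h₂ (Icc 0 r)) (Icc 0 r) :=
    fun x hx => derivWithin_sub (D₁ x hx) (D₂ x hx)
  have hdd : ∀ x ∈ Icc 0 r, derivWithin (derivWithin (h₁ - h₂) (Icc 0 r)) (Icc 0 r) x =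
      derivWithin (derivWithin h₁ (Icc 0 r)) (Icc 0 r) x -
        derivWithin (derivWithin h₂ (Icc 0 r)) (Icc 0 r) x := fun x hx => by
    rw [derivWithin_congr hd (hd hx), derivWithin_sub (D₁' x hx) (D₂' x hx)]
  refine ⟨S₁.sub S₂, by simp [h₁₀, h₂₀], ?_, fun x hx => ?_⟩
  · rw [hd (left_mem_Icc.2 hr.le)]
    simp [d₁₀, d₂₀]
  · rw [hdd x (Ioc_subset_Icc_self hx), hd (Ioc_subset_Icc_self hx), Pi.sub_apply,
      Pi.sub_apply, ← ode₁ x hx, ← ode₂ x hx]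
    ring

lemma LinSol.eqOn_zero (hr : 0 < r) (H : LinSol r 0 h) : EqOn h 0 (Icc 0 r) := by
  obtain ⟨S, h₀, d₀, ode⟩ := H
  have hs := uniqueDiffOn_Icc hr
  have hh' : EqOn (derivWithin h (Icc 0 r)) 0 (Icc 0 r) :=
    eqOn_zero_of_derivWithin_add_div_eq_zero hr
      ((S.derivWithin hs (m := 1) le_rfl).differentiableOn one_ne_zero) d₀ ode
  intro x hx
  rw [constant_of_derivWithin_zero (S.differentiableOn two_ne_zero)
    (fun y hy => hh' (Ico_subset_Icc_self hy)) x hx, h₀]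
  rfl

lemma LinSol.eqOn (hr : 0 < r) (H₁ : LinSol r g h₁) (H₂ : LinSol r g h₂) :
    EqOn h₁ h₂ (Icc 0 r) := fun _ hx =>
  sub_eq_zero.1 ((sub_self g ▸ H₁.sub hr H₂).eqOn_zero hr hx)

end Uniqueness

noncomputable def firstMoment (G : ℝ → ℝ) (x : ℝ) : ℝ := ∫ t in (0 : ℝ)..x, t * G t

noncomputable def logMoment (G : ℝ → ℝ) (x : ℝ) : ℝ := ∫ t in (0 : ℝ)..x, t * Real.log t * G t

noncomputable def radialInverse (G : ℝ → ℝ) (x : ℝ) : ℝ :=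
  Real.log x * firstMoment G x - logMoment G x

-- At `0` this is the right-hand limit `G 0 / 2`, not the junk value of the other branch (`G 0`).
noncomputable def radialInverseDeriv2 (G : ℝ → ℝ) (x : ℝ) : ℝ :=
  if x = 0 then G 0 / 2 else G x - firstMoment G x / x ^ 2

section Existence

variable {G : ℝ → ℝ}

@[simp] lemma firstMoment_zero : firstMoment G 0 = 0 := intervalIntegral.integral_same

@[simp] lemma logMoment_zero : logMoment G 0 = 0 := intervalIntegral.integral_same

@[simp] lemma radialInverse_zero : radialInverse G 0 = 0 := by simp [radialInverse]

lemma hasDerivAt_firstMoment (hG : Continuous G) (x : ℝ) :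
    HasDerivAt (firstMoment G) (x * G x) x :=
  ((continuous_id.mul hG).integral_hasStrictDerivAt 0 x).hasDerivAt

lemma hasDerivAt_logMoment (hG : Continuous G) (x : ℝ) :
    HasDerivAt (logMoment G) (x * Real.log x * G x) x :=
  ((Real.continuous_mul_log.mul hG).integral_hasStrictDerivAt 0 x).hasDerivAt

lemma continuous_firstMoment (hG : Continuous G) : Continuous (firstMoment G) :=
  continuous_iff_continuousAt.2 fun x => (hasDerivAt_firstMoment hG x).continuousAt

lemma continuous_logMoment (hG : Continuous G) : Continuous (logMoment G) :=
  continuous_iff_continuousAt.2 fun x => (hasDerivAt_logMoment hG x).continuousAt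

lemma tendsto_firstMoment_div (hG : Continuous G) :
    Tendsto (fun x => firstMoment G x / x) (𝓝[>] 0) (𝓝 0) := by
  have := (hasDerivAt_firstMoment hG 0).tendsto_slope
  simp only [zero_mul] at this
  refine (this.mono_left (nhdsWithin_mono _ fun x hx => ne_of_gt hx)).congr fun x => ?_
  simp [slope_def_field]

lemma tendsto_firstMoment_div_sq (hG : Continuous G) :
    Tendsto (fun x => firstMoment G x / x ^ 2) (𝓝[>] 0) (𝓝 (G 0 / 2)) := by
  refine HasDerivAt.lhopital_zero_right_on_Ioo (f' := fun x => x * G x) (g' := fun x => 2 * x)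
    one_pos (fun x _ => hasDerivAt_firstMoment hG x) (fun x _ => by simpa using hasDerivAt_pow 2 x)
    (fun x hx => mul_ne_zero two_ne_zero hx.1.ne') ?_ ?_ ?_
  · simpa using ((continuous_firstMoment hG).tendsto 0).mono_left nhdsWithin_le_nhds
  · simpa using ((continuous_pow 2).tendsto (0 : ℝ)).mono_left nhdsWithin_le_nhds
  · refine (((hG.tendsto 0).mono_left nhdsWithin_le_nhds).div_const 2).congr'
      (eventually_nhdsWithin_of_forall fun x (hx : 0 < x) => ?_)
    field_simp

lemma hasDerivAt_radialInverse (hG : Continuous G) {x : ℝ} (hx : 0 < x) :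
    HasDerivAt (radialInverse G) (firstMoment G x / x) x := by
  refine (((Real.hasDerivAt_log hx.ne').mul (hasDerivAt_firstMoment hG x)).sub
    (hasDerivAt_logMoment hG x)).congr_deriv ?_
  field_simp
  ring

lemma tendsto_radialInverse (hG : Continuous G) :
    Tendsto (radialInverse G) (𝓝[>] 0) (𝓝 0) := by
  -- `log x · F(x) = (x log x) · (F(x) / x)`
  have hlog : Tendsto (fun x : ℝ => x * Real.log x) (𝓝[>] 0) (𝓝 0) := by
    simpa using (Real.continuous_mul_log.tendsto 0).mono_left nhdsWithin_le_nhds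
  have hJ : Tendsto (logMoment G) (𝓝[>] 0) (𝓝 0) := by
    simpa using ((continuous_logMoment hG).tendsto 0).mono_left nhdsWithin_le_nhds
  have hprod := (hlog.mul (tendsto_firstMoment_div hG)).sub hJ
  rw [mul_zero, sub_zero] at hprod
  refine hprod.congr' (eventually_nhdsWithin_of_forall fun x (hx : 0 < x) => ?_)
  simp only [radialInverse]
  field_simp

lemma hasDerivWithinAt_radialInverse (hG : Continuous G) {x : ℝ} (hx : 0 ≤ x) :
    HasDerivWithinAt (radialInverse G) (firstMoment G x / x) (Ici 0) x := by
  rcases hx.eq_or_lt with rfl | hx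
  · simpa using hasDerivWithinAt_Ici_of_hasDerivAt_of_tendsto
      (fun x hx => hasDerivAt_radialInverse hG hx) (by simpa using tendsto_radialInverse hG)
      (tendsto_firstMoment_div hG)
  · exact (hasDerivAt_radialInverse hG hx).hasDerivWithinAt

lemma hasDerivAt_firstMoment_div (hG : Continuous G) {x : ℝ} (hx : 0 < x) :
    HasDerivAt (fun y => firstMoment G y / y) (G x - firstMoment G x / x ^ 2) x := by
  refine ((hasDerivAt_firstMoment hG x).div (hasDerivAt_id' x) hx.ne').congr_deriv ?_
  field_simp

lemma hasDerivWithinAt_firstMoment_div (hG : Continuous G) {x : ℝ} (hx : 0 ≤ x) :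
    HasDerivWithinAt (fun y => firstMoment G y / y) (radialInverseDeriv2 G x) (Ici 0) x := by
  rcases hx.eq_or_lt with rfl | hx
  · have := hasDerivWithinAt_Ici_of_hasDerivAt_of_tendsto
      (fun x hx => hasDerivAt_firstMoment_div hG hx) (by simpa using tendsto_firstMoment_div hG)
      (((hG.tendsto 0).mono_left nhdsWithin_le_nhds).sub (tendsto_firstMoment_div_sq hG))
    simpa [radialInverseDeriv2, sub_half] using this
  · simpa [radialInverseDeriv2, hx.ne'] using (hasDerivAt_firstMoment_div hG hx).hasDerivWithinAt

lemma continuousOn_radialInverseDeriv2 (hG : Continuous G) :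
    ContinuousOn (radialInverseDeriv2 G) (Ici 0) := by
  have hoff : ∀ x ≠ 0, radialInverseDeriv2 G x = G x - firstMoment G x / x ^ 2 :=
    fun x hx => if_neg hx
  intro x hx
  rcases (mem_Ici.1 hx).eq_or_lt with rfl | hx
  · rw [← continuousWithinAt_Ioi_iff_Ici, ContinuousWithinAt, radialInverseDeriv2, if_pos rfl]
    have := ((hG.tendsto 0).mono_left nhdsWithin_le_nhds).sub (tendsto_firstMoment_div_sq hG)
    rw [sub_half] at this
    exact this.congr' (eventually_nhdsWithin_of_forall fun y (hy : 0 < y) => (hoff y hy.ne').symm)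
  · refine ContinuousAt.continuousWithinAt ?_
    refine (hG.continuousAt.sub ((continuous_firstMoment hG).continuousAt.div
      (continuous_pow 2).continuousAt (by positivity))).congr ?_
    filter_upwards [eventually_ne_nhds hx.ne'] with y hy using (hoff y hy).symm

lemma abs_firstMoment_le {M x : ℝ} (hx : 0 ≤ x) (hM : ∀ t ∈ Icc 0 x, |G t| ≤ M) :
    |firstMoment G x| ≤ M * x ^ 2 / 2 := by
  have hle : ∀ t ∈ Ioc 0 x, ‖t * G t‖ ≤ M * t := fun t ht => by
    rw [Real.norm_eq_abs, abs_mul, abs_of_pos ht.1, mul_comm M]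
    exact mul_le_mul_of_nonneg_left (hM t (Ioc_subset_Icc_self ht)) ht.1.le
  calc |firstMoment G x| ≤ ∫ t in (0 : ℝ)..x, M * t :=
        intervalIntegral.norm_integral_le_of_norm_le hx (Eventually.of_forall hle)
          ((continuous_const.mul continuous_id).intervalIntegrable _ _)
    _ = M * x ^ 2 / 2 := by
        rw [intervalIntegral.integral_const_mul, integral_id]
        ring

lemma abs_radialInverseDeriv2_le {M x : ℝ} (hx : 0 ≤ x) (hM : ∀ t ∈ Icc 0 x, |G t| ≤ M) :
    |radialInverseDeriv2 G x| ≤ 3 / 2 * M := by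
  have hM₀ : |G 0| ≤ M := hM 0 (left_mem_Icc.2 hx)
  rcases hx.eq_or_lt with rfl | hx
  · rw [radialInverseDeriv2, if_pos rfl, abs_div, abs_two]
    linarith [abs_nonneg (G 0)]
  · have hF : |firstMoment G x / x ^ 2| ≤ M / 2 := by
      rw [abs_div, abs_of_pos (pow_pos hx 2), div_le_iff₀ (pow_pos hx 2)]
      linarith [abs_firstMoment_le hx.le hM]
    calc |radialInverseDeriv2 G x| = |G x - firstMoment G x / x ^ 2| := by
          rw [radialInverseDeriv2, if_neg hx.ne']
      _ ≤ |G x| + |firstMoment G x / x ^ 2| := abs_sub _ _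
      _ ≤ 3 / 2 * M := by linarith [hM x (right_mem_Icc.2 hx.le)]

lemma radialInverse_eq_integral (hG : Continuous G) (x : ℝ) :
    radialInverse G x = ∫ t in (0 : ℝ)..x, (Real.log x - Real.log t) * t * G t := by
  have hF : IntervalIntegrable (fun t => Real.log x * (t * G t)) MeasureTheory.volume 0 x :=
    (continuous_const.mul (continuous_id.mul hG)).intervalIntegrable _ _
  have hJ : IntervalIntegrable (fun t => t * Real.log t * G t) MeasureTheory.volume 0 x :=
    (Real.continuous_mul_log.mul hG).intervalIntegrable _ _
  rw [radialInverse, firstMoment, logMoment, ← intervalIntegral.integral_const_mul,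
    ← intervalIntegral.integral_sub hF hJ]
  congr 1 with t
  ring

variable {r : ℝ}

lemma derivWithin_derivWithin_radialInverse (hr : 0 < r) (hG : Continuous G) :
    EqOn (derivWithin (derivWithin (radialInverse G) (Icc 0 r)) (Icc 0 r))
      (radialInverseDeriv2 G) (Icc 0 r) :=
  derivWithin_derivWithin_eqOn (uniqueDiffOn_Icc hr)
    (fun _ hx => (hasDerivWithinAt_radialInverse hG hx.1).mono Icc_subset_Ici_self)
    (fun _ hx => (hasDerivWithinAt_firstMoment_div hG hx.1).mono Icc_subset_Ici_self)

lemma linSol_radialInverse (hr : 0 < r) (hG : Continuous G) : LinSol r G (radialInverse G) := by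
  have hs := uniqueDiffOn_Icc hr
  have h₀ := left_mem_Icc.2 hr.le
  have hf : ∀ x ∈ Icc 0 r,
      HasDerivWithinAt (radialInverse G) (firstMoment G x / x) (Icc 0 r) x :=
    fun _ hx => (hasDerivWithinAt_radialInverse hG hx.1).mono Icc_subset_Ici_self
  have hf' : ∀ x ∈ Icc 0 r, HasDerivWithinAt (fun y => firstMoment G y / y)
      (radialInverseDeriv2 G x) (Icc 0 r) x :=
    fun _ hx => (hasDerivWithinAt_firstMoment_div hG hx.1).mono Icc_subset_Ici_self
  refine ⟨contDiffOn_two_of_hasDerivWithinAt hs hf hf'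
      ((continuousOn_radialInverseDeriv2 hG).mono Icc_subset_Ici_self),
    radialInverse_zero, by simpa using (hf 0 h₀).derivWithin (hs 0 h₀),
    fun x hx => ?_⟩
  have hx' := Ioc_subset_Icc_self hx
  rw [derivWithin_derivWithin_radialInverse hr hG hx', (hf x hx').derivWithin (hs x hx'),
    radialInverseDeriv2, if_neg hx.1.ne']
  field_simp
  ring

end Existence

/-- For every `r > 0` and continuous `g : [0,r] → ℝ` there is a unique `h ∈ C²₀([0,r])`
with `h'' + h'/x = g` on `(0,r]`; moreover `‖h''‖_{C⁰} ≤ (3/2)‖g‖_{C⁰}` and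
`h(x) = ∫₀ˣ (log x - log t) t g(t) dt`. -/
theorem linear_inverse_C2 (r : ℝ) (hr : 0 < r) (g : ℝ → ℝ)
    (hg : ContinuousOn g (Icc 0 r)) :
    ∃ h : ℝ → ℝ, LinSol r g h ∧
      (∀ h' : ℝ → ℝ, LinSol r g h' → EqOn h' h (Icc 0 r)) ∧
      (∀ x ∈ Icc (0:ℝ) r,
        |derivWithin (derivWithin h (Icc 0 r)) (Icc 0 r) x|
          ≤ 3 / 2 * sSup ((fun t => |g t|) '' Icc 0 r)) ∧
      (∀ x ∈ Icc (0:ℝ) r,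
        h x = ∫ t in (0:ℝ)..x, (Real.log x - Real.log t) * t * g t) := by
  obtain ⟨G, hG, hGg⟩ : ∃ G : ℝ → ℝ, Continuous G ∧ EqOn G g (Icc 0 r) :=
    ⟨IccExtend hr.le ((Icc 0 r).domRestrict g), continuous_IccExtend_iff.2 hg.domRestrict,
      fun x hx => IccExtend_of_mem hr.le _ hx⟩
  have hsol : LinSol r g (radialInverse G) :=
    (linSol_radialInverse hr hG).congr (hGg.mono Ioc_subset_Icc_self)
  have hbdd : BddAbove ((fun t => |g t|) '' Icc 0 r) := isCompact_Icc.bddAbove_image hg.abs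
  refine ⟨radialInverse G, hsol, fun h' hh' => hh'.eqOn hr hsol, fun x hx => ?_, fun x hx => ?_⟩
  · rw [derivWithin_derivWithin_radialInverse hr hG hx]
    refine abs_radialInverseDeriv2_le hx.1 fun t ht => ?_
    have ht' := Icc_subset_Icc_right hx.2 ht
    rw [hGg ht']
    exact le_csSup hbdd (mem_image_of_mem _ ht')
  · rw [radialInverse_eq_integral hG]
    refine intervalIntegral.integral_congr fun t ht => ?_
    rw [uIcc_of_le hx.1] at ht
    simp only [hGg (Icc_subset_Icc_right hx.2 ht)]
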